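/- arXiv:1405.5652 — 2 statements merged into one kernel-verified Lean document; each statement's English description precedes it below -/
import Mathlib

section
/- Let γ₁,γ₂ be nonzero reals not both positive, and consider a polynomial equation rₙxⁿ + r_{n-1}x^{n-1} + ⋯ + r₀ = 0 with real coefficients rₖ in H(γ₁,γ₂). Then every non-real root of this equation is hyperboloidal. -/
/-!
Every `a ∈ H(c₁, c₂)` is a root of its reduced characteristic polynomial
`X² - 2 re(a) X + nrd(a)`, and this polynomial depends only on the real part of `a` and the value
of the norm form on its imaginary part. When `a` is not real it is the minimal polynomial of `a`
over `ℝ`, so it divides every real polynomial vanishing at `a`, and such a polynomial therefore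
vanishes at every `x₁` sharing both invariants with `a`.
-/

open Quaternion Polynomial

theorem minpoly_eq_of_natDegree_eq_two {K A : Type*} [Field K] [Ring A] [Nontrivial A]
    [Algebra K A] {x : A} (hx : x ∉ (algebraMap K A).range) {q : K[X]} (hq : q.Monic)
    (hdeg : q.natDegree = 2) (hqx : aeval x q = 0) : minpoly K x = q := by
  have hint : IsIntegral K x := ⟨q, hq, hqx⟩
  refine (eq_of_monic_of_dvd_of_natDegree_le (minpoly.monic hint) hq
    (minpoly.dvd K x hqx) ?_).symm
  rw [hdeg]
  exact (minpoly.two_le_natDegree_iff hint).mpr hx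

namespace QuaternionAlgebra

variable {R : Type*} [CommRing R] {c₁ c₂ c₃ : R}

theorem mem_range_algebraMap_iff {x : ℍ[R, c₁, c₂, c₃]} :
    x ∈ (algebraMap R ℍ[R, c₁, c₂, c₃]).range ↔ x.imI = 0 ∧ x.imJ = 0 ∧ x.imK = 0 := by
  constructor
  · rintro ⟨r, rfl⟩
    simp [algebraMap_eq]
  · rintro ⟨hI, hJ, hK⟩
    exact ⟨x.re, by ext <;> simp [algebraMap_eq, hI, hJ, hK]⟩

noncomputable def reducedCharpoly (a : ℍ[R, c₁, c₂]) : R[X] :=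
  X ^ 2 - C (2 * a.re) * X + C (a.re ^ 2 - c₁ * a.imI ^ 2 - c₂ * a.imJ ^ 2 + c₁ * c₂ * a.imK ^ 2)

theorem reducedCharpoly_monic [Nontrivial R] (a : ℍ[R, c₁, c₂]) : (reducedCharpoly a).Monic := by
  unfold reducedCharpoly; monicity!

theorem natDegree_reducedCharpoly [Nontrivial R] (a : ℍ[R, c₁, c₂]) :
    (reducedCharpoly a).natDegree = 2 := by
  unfold reducedCharpoly; compute_degree!

theorem aeval_self_reducedCharpoly (a : ℍ[R, c₁, c₂]) : aeval a (reducedCharpoly a) = 0 := by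
  simp only [reducedCharpoly, map_add, map_sub, map_pow, aeval_X, aeval_C, map_mul]
  ext <;> simp [algebraMap_eq, sq] <;> ring

theorem reducedCharpoly_eq_of_re_eq_of_norm_eq {a b : ℍ[R, c₁, c₂]} (hre : b.re = a.re)
    (hnorm : -c₁ * b.imI ^ 2 - c₂ * b.imJ ^ 2 + c₁ * c₂ * b.imK ^ 2 =
      -c₁ * a.imI ^ 2 - c₂ * a.imJ ^ 2 + c₁ * c₂ * a.imK ^ 2) :
    reducedCharpoly b = reducedCharpoly a := by
  unfold reducedCharpoly
  rw [hre]
  congr 2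
  linear_combination hnorm

end QuaternionAlgebra

open QuaternionAlgebra

theorem statement9_general (γ₁ γ₂ : ℝ)
    (n : ℕ) (r : Fin (n + 1) → ℝ) (x₀ : ℍ[ℝ, -γ₁, -γ₂])
    (hroot : ∑ k : Fin (n + 1), r k • x₀ ^ (k : ℕ) = 0)
    (hnonreal : ¬(x₀.imI = 0 ∧ x₀.imJ = 0 ∧ x₀.imK = 0)) :
    ∀ x₁ : ℍ[ℝ, -γ₁, -γ₂], x₁.re = x₀.re →
      γ₁ * x₁.imI ^ 2 + γ₂ * x₁.imJ ^ 2 + γ₁ * γ₂ * x₁.imK ^ 2 =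
        γ₁ * x₀.imI ^ 2 + γ₂ * x₀.imJ ^ 2 + γ₁ * γ₂ * x₀.imK ^ 2 →
      ∑ k : Fin (n + 1), r k • x₁ ^ (k : ℕ) = 0 := by
  intro x₁ hre hnorm
  set p : ℝ[X] := ∑ k : Fin (n + 1), C (r k) * X ^ (k : ℕ)
  have aeval_p (x : ℍ[ℝ, -γ₁, -γ₂]) : aeval x p = ∑ k : Fin (n + 1), r k • x ^ (k : ℕ) := by
    simp [p, Algebra.smul_def]
  have hmin : minpoly ℝ x₀ = reducedCharpoly x₀ :=
    minpoly_eq_of_natDegree_eq_two (mem_range_algebraMap_iff.not.mpr hnonreal)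
      (reducedCharpoly_monic x₀) (natDegree_reducedCharpoly x₀) (aeval_self_reducedCharpoly x₀)
  have hdvd : reducedCharpoly x₀ ∣ p := hmin ▸ minpoly.dvd ℝ x₀ (by rw [aeval_p, hroot])
  have hx₁ : aeval x₁ (reducedCharpoly x₀) = 0 := by
    rw [← reducedCharpoly_eq_of_re_eq_of_norm_eq hre (by linear_combination hnorm)]
    exact aeval_self_reducedCharpoly x₁
  rw [← aeval_p]
  exact aeval_eq_zero_of_dvd_aeval_eq_zero hdvd hx₁

/-- Let `γ₁, γ₂` be nonzero reals, not both positive.  Every non-real root of a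
polynomial equation `rₙxⁿ + ⋯ + r₀ = 0` with real coefficients in `H(γ₁,γ₂)` is
hyperboloidal: every `x₁` with the same real part and the same value of the quadratic form
`γ₁b₁² + γ₂b₂² + γ₁γ₂b₃²` on the imaginary part is also a root. -/
theorem statement9 (γ₁ γ₂ : ℝ) (h₁ : γ₁ ≠ 0) (h₂ : γ₂ ≠ 0) (hng : ¬(0 < γ₁ ∧ 0 < γ₂))
    (n : ℕ) (r : Fin (n + 1) → ℝ) (x₀ : ℍ[ℝ, -γ₁, -γ₂])
    (hroot : ∑ k : Fin (n + 1), r k • x₀ ^ (k : ℕ) = 0)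
    (hnonreal : ¬(x₀.imI = 0 ∧ x₀.imJ = 0 ∧ x₀.imK = 0)) :
    ∀ x₁ : ℍ[ℝ, -γ₁, -γ₂], x₁.re = x₀.re →
      γ₁ * x₁.imI ^ 2 + γ₂ * x₁.imJ ^ 2 + γ₁ * γ₂ * x₁.imK ^ 2 =
        γ₁ * x₀.imI ^ 2 + γ₂ * x₀.imJ ^ 2 + γ₁ * γ₂ * x₀.imK ^ 2 →
      ∑ k : Fin (n + 1), r k • x₁ ^ (k : ℕ) = 0 :=
  statement9_general γ₁ γ₂ n r x₀ hroot hnonreal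
end

section
/- Let a ∈ O(1,1,-1) be a split octonion with N(a) > 0 and a₀² < N(a). Writing √N(a)·(cos λ + w sin λ) = a, where w is the normalized imaginary part (satisfying N(w) = 1, t(w) = 0, w² = -1), we have aⁿ = N(a)^{n/2}(cos nλ + w sin nλ) for every positive integer n. -/
open Quaternion

/-- The split octonion algebra `O(1,1,-1)`, realized via the Cayley–Dickson construction on
the Hamilton quaternions with parameter `+1`: pairs `(a,b)` multiplying by
`(a,b)(c,d) = (ac + d̄b, da + bc̄)`, so that `f₄ = (0,1)` satisfies `f₄² = 1 = -(-1)`. -/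
abbrev OctS : Type := ℍ[ℝ] × ℍ[ℝ]

/-- Split octonion multiplication. -/
noncomputable def omulS (x y : OctS) : OctS :=
  (x.1 * y.1 + star y.2 * x.2, y.2 * x.1 + x.2 * star y.1)

/-- The split octonion unit `1`. -/
noncomputable def ooneS : OctS := ((1 : ℍ[ℝ]), 0)

/-- Split octonion powers. -/
noncomputable def opowS (x : OctS) : ℕ → OctS
  | 0 => ooneS
  | n + 1 => omulS x (opowS x n)

/-- The split octonion norm `N(a) = a₀² + a₁² + a₂² + a₃² - a₄² - a₅² - a₆² - a₇²`. -/
noncomputable def octNormSqS (x : OctS) : ℝ := Quaternion.normSq x.1 - Quaternion.normSq x.2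

/-- The real (scalar) part `a₀` of a split octonion, so the trace is `t(a) = 2a₀`. -/
noncomputable def octReS (x : OctS) : ℝ := x.1.re

/-- The imaginary part of a split octonion. -/
noncomputable def oimS (x : OctS) : OctS := ((⟨0, x.1.imI, x.1.imJ, x.1.imK⟩ : ℍ[ℝ]), x.2)

lemma omulS_smul_left (r : ℝ) (x y : OctS) : omulS (r • x) y = r • omulS x y := by
  simp [omulS, Prod.smul_def, smul_add, mul_smul_comm, smul_mul_assoc]

lemma omulS_smul_right (r : ℝ) (x y : OctS) : omulS x (r • y) = r • omulS x y := by
  simp [omulS, Prod.smul_def, smul_add, mul_smul_comm, smul_mul_assoc]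

lemma omulS_add_left (x y z : OctS) : omulS (x + y) z = omulS x z + omulS y z := by
  simp [omulS, Prod.add_def, add_mul, mul_add]; constructor <;> abel

lemma omulS_add_right (x y z : OctS) : omulS x (y + z) = omulS x y + omulS x z := by
  simp [omulS, Prod.add_def, add_mul, mul_add]; constructor <;> abel

lemma omulS_one_right (x : OctS) : omulS x ooneS = x := by
  simp [omulS, ooneS]

lemma omulS_one_left (x : OctS) : omulS ooneS x = x := by
  simp [omulS, ooneS]

/-- let `a ∈ O(1,1,-1)` be a split octonion with `N(a) > 0` (timelike) and
`a₀² < N(a)`.  Writing `a = √N(a)(cos λ + w sin λ)` with `w` the normalized imaginary part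
(which satisfies `N(w) = 1`, `t(w) = 0`, `w² = -1`), we have
`aⁿ = N(a)^{n/2}(cos nλ + w sin nλ)` for every positive integer `n`. -/
theorem statement18 (a w : OctS) (lam : ℝ)
    (hN : 0 < octNormSqS a) (ha0 : octReS a ^ 2 < octNormSqS a)
    (hw : w = (Real.sqrt (octNormSqS a - octReS a ^ 2))⁻¹ • oimS a)
    (hNw : octNormSqS w = 1) (htw : octReS w = 0) (hw2 : omulS w w = -ooneS)
    (hdec : a = Real.sqrt (octNormSqS a) • (Real.cos lam • ooneS + Real.sin lam • w)) :
    ∀ n : ℕ, 0 < n →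
      opowS a n = (octNormSqS a ^ ((n : ℝ) / 2)) •
        (Real.cos (n * lam) • ooneS + Real.sin (n * lam) • w) := by
  have hsqrt := Real.sqrt_eq_rpow (octNormSqS a)
  intro n hn
  induction n with
  | zero => exact absurd hn (lt_irrefl 0)
  | succ n ih =>
    rcases Nat.eq_zero_or_pos n with h0 | hpos
    · subst h0
      simpa [opowS, omulS_one_right, hsqrt] using hdec
    · have key : opowS a (n + 1) = omulS a (opowS a n) := rfl
      rw [key, ih hpos]
      nth_rw 1 [hdec]
      simp only [omulS_smul_left, omulS_smul_right, omulS_add_left, omulS_add_right,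
        omulS_one_left, omulS_one_right, hw2]
      push_cast
      have hexp : octNormSqS a ^ (((n : ℝ) + 1) / 2)
          = octNormSqS a ^ ((1 : ℝ) / 2) * octNormSqS a ^ ((n : ℝ) / 2) := by
        rw [← Real.rpow_add hN]; ring_nf
      rw [hsqrt, hexp, show ((n : ℝ) + 1) * lam = lam + n * lam by ring,
        Real.cos_add, Real.sin_add]
      module
end
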